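/- Let H = H₁ ⊕ H₂, φ₀ ∈ (0, π/2), let T₁₁ ∈ B(H₁) be a contraction, and let V ∈ B(H₁,H₂), U ∈ B(H₂,H₁) be contractions. Define the column contractions T₁ := (T₁₁; V·D_{T₁₁}) : H₁ → H and T₂ := (T₁₁*; U*·D_{T₁₁*}) : H₁ → H, with defect operators D_{T₁} = (I − T₁*T₁)^{1/2} and D_{T₂} = (I − T₂*T₂)^{1/2} on H₁. Assume 2·cot φ₀·|Im⟨T₁₁ f, f⟩| ≤ ‖D_{T₁} f‖² and 2·cot φ₀·|Im⟨T₁₁* f, f⟩| ≤ ‖D_{T₂} f‖² for all f ∈ H₁. Then there exist selfadjoint contractions C', C'' ∈ B(H₁) such that 2·cot φ₀·Im(T₁₁*) = D_{T₁₁}·D_V·C'·D_V·D_{T₁₁} and 2·cot φ₀·Im(T₁₁*) = D_{T₁₁*}·D_{U*}·C''·D_{U*}·D_{T₁₁*}. -/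

import Mathlib

open ContinuousLinearMap Complex
open scoped InnerProductSpace

noncomputable section

/-- Positive square root of a (nonnegative selfadjoint) bounded operator,
via the continuous functional calculus. -/
def opSqrt {H : Type*} [NormedAddCommGroup H] [InnerProductSpace ℂ H] [CompleteSpace H]
    (A : H →L[ℂ] H) : H →L[ℂ] H :=
  cfc Real.sqrt A

/-- Defect operator `D_T = (I - T*T)^{1/2}` of a contraction `T`. -/
def defectOp {H K : Type*} [NormedAddCommGroup H] [InnerProductSpace ℂ H] [CompleteSpace H]
    [NormedAddCommGroup K] [InnerProductSpace ℂ K] [CompleteSpace K] (T : H →L[ℂ] K) :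
    H →L[ℂ] H :=
  opSqrt (1 - (ContinuousLinearMap.adjoint T).comp T)

/-- Defect operator `D_{T*} = (I - TT*)^{1/2}` of a contraction `T`. -/
def codefectOp {H K : Type*} [NormedAddCommGroup H] [InnerProductSpace ℂ H] [CompleteSpace H]
    [NormedAddCommGroup K] [InnerProductSpace ℂ K] [CompleteSpace K] (T : H →L[ℂ] K) :
    K →L[ℂ] K :=
  opSqrt (1 - T.comp (ContinuousLinearMap.adjoint T))

/-- The class `C_H(φ)`: `‖T sin φ + i cos φ I‖ ≤ 1` and `‖T sin φ - i cos φ I‖ ≤ 1`. -/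
def CHclass {H : Type*} [NormedAddCommGroup H] [InnerProductSpace ℂ H] [CompleteSpace H]
    (φ : ℝ) (T : H →L[ℂ] H) : Prop :=
  ‖(Real.sin φ : ℂ) • T + (Complex.I * (Real.cos φ : ℂ)) • 1‖ ≤ 1 ∧
  ‖(Real.sin φ : ℂ) • T - (Complex.I * (Real.cos φ : ℂ)) • 1‖ ≤ 1

section BlockDefs

variable (E F : Type*) [NormedAddCommGroup E] [InnerProductSpace ℂ E] [CompleteSpace E]
  [NormedAddCommGroup F] [InnerProductSpace ℂ F] [CompleteSpace F]

/-- Isometric inclusion of the first summand into `E ⊕ F` (with the `L²` norm). -/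
def embL : E →L[ℂ] WithLp 2 (E × F) :=
  (↑(WithLp.prodContinuousLinearEquiv 2 ℂ E F).symm : (E × F) →L[ℂ] WithLp 2 (E × F)).comp
    (ContinuousLinearMap.inl ℂ E F)

/-- Isometric inclusion of the second summand into `E ⊕ F`. -/
def embR : F →L[ℂ] WithLp 2 (E × F) :=
  (↑(WithLp.prodContinuousLinearEquiv 2 ℂ E F).symm : (E × F) →L[ℂ] WithLp 2 (E × F)).comp
    (ContinuousLinearMap.inr ℂ E F)

/-- Orthogonal projection of `E ⊕ F` onto the first summand. -/
def projL : WithLp 2 (E × F) →L[ℂ] E :=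
  (ContinuousLinearMap.fst ℂ E F).comp
    (↑(WithLp.prodContinuousLinearEquiv 2 ℂ E F) : WithLp 2 (E × F) →L[ℂ] E × F)

/-- Orthogonal projection of `E ⊕ F` onto the second summand. -/
def projR : WithLp 2 (E × F) →L[ℂ] F :=
  (ContinuousLinearMap.snd ℂ E F).comp
    (↑(WithLp.prodContinuousLinearEquiv 2 ℂ E F) : WithLp 2 (E × F) →L[ℂ] E × F)

end BlockDefs

/-- The column operator `(A; B) : H₁ → H₁ ⊕ H₂`. -/
def colOp {H₁ H₂ : Type*}
    [NormedAddCommGroup H₁] [InnerProductSpace ℂ H₁] [CompleteSpace H₁]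
    [NormedAddCommGroup H₂] [InnerProductSpace ℂ H₂] [CompleteSpace H₂]
    (A : H₁ →L[ℂ] H₁) (B : H₁ →L[ℂ] H₂) : H₁ →L[ℂ] WithLp 2 (H₁ × H₂) :=
  (embL H₁ H₂).comp A + (embR H₁ H₂).comp B


section Aux

variable {H K : Type*} [NormedAddCommGroup H] [InnerProductSpace ℂ H] [CompleteSpace H]
  [NormedAddCommGroup K] [InnerProductSpace ℂ K] [CompleteSpace K]

lemma isSelfAdjoint_defectOp (T : H →L[ℂ] K) : IsSelfAdjoint (defectOp T) :=
  cfc_predicate _ _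

lemma one_sub_adjoint_comp_nonneg (T : H →L[ℂ] K) (hT : ‖T‖ ≤ 1) :
    (0 : H →L[ℂ] H) ≤ 1 - (adjoint T).comp T := by
  rw [ContinuousLinearMap.nonneg_iff_isPositive, ContinuousLinearMap.isPositive_def']
  constructor
  · rw [IsSelfAdjoint, ContinuousLinearMap.star_eq_adjoint, map_sub, adjoint_comp,
      adjoint_adjoint]
    congr 1
    exact adjoint_id
  · intro x
    have h1 : ‖T x‖ ≤ ‖x‖ := by
      calc ‖T x‖ ≤ ‖T‖ * ‖x‖ := T.le_opNorm x
      _ ≤ 1 * ‖x‖ := by gcongr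
      _ = ‖x‖ := one_mul _
    simp only [ContinuousLinearMap.reApplyInnerSelf, ContinuousLinearMap.sub_apply,
      ContinuousLinearMap.one_apply, ContinuousLinearMap.comp_apply, inner_sub_left]
    rw [adjoint_inner_left]
    simp only [map_sub]
    rw [@inner_self_eq_norm_sq ℂ, @inner_self_eq_norm_sq ℂ]
    nlinarith [norm_nonneg (T x), norm_nonneg x]

lemma defectOp_comp_self (T : H →L[ℂ] K) (hT : ‖T‖ ≤ 1) :
    (defectOp T).comp (defectOp T) = 1 - (adjoint T).comp T := by
  have h0 := one_sub_adjoint_comp_nonneg T hT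
  have hsa : IsSelfAdjoint (1 - (adjoint T).comp T) := IsSelfAdjoint.of_nonneg h0
  rw [defectOp, opSqrt, ← ContinuousLinearMap.mul_def, ← cfc_mul Real.sqrt Real.sqrt]
  calc cfc (fun x => Real.sqrt x * Real.sqrt x) (1 - (adjoint T).comp T)
      = cfc (fun x : ℝ => x) (1 - (adjoint T).comp T) :=
        cfc_congr fun x hx => Real.mul_self_sqrt (spectrum_nonneg_of_nonneg h0 hx)
    _ = _ := cfc_id ℝ _

lemma defectOp_norm_sq (T : H →L[ℂ] K) (hT : ‖T‖ ≤ 1) (f : H) :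
    ‖defectOp T f‖ ^ 2 = ‖f‖ ^ 2 - ‖T f‖ ^ 2 := by
  have hD := isSelfAdjoint_defectOp T
  have hadj : adjoint (defectOp T) = defectOp T := by
    rw [← ContinuousLinearMap.star_eq_adjoint]; exact hD
  have h1 := adjoint_inner_left (defectOp T) f ((defectOp T) f)
  rw [hadj] at h1
  have h2 : (defectOp T) ((defectOp T) f) = f - (adjoint T) (T f) := by
    have := congrArg (fun (S : H →L[ℂ] H) => S f) (defectOp_comp_self T hT)
    simpa using this
  have h3 := adjoint_inner_left T f (T f)
  have hn := norm_sq_eq_re_inner (𝕜 := ℂ) ((defectOp T) f)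
  rw [hn, ← h1, h2, inner_sub_left, h3, map_sub,
    @inner_self_eq_norm_sq ℂ, @inner_self_eq_norm_sq ℂ]

end Aux

section Central

variable {H : Type*} [NormedAddCommGroup H] [InnerProductSpace ℂ H] [CompleteSpace H]

lemma douglasLite (R T : H →L[ℂ] H) (c : ℝ) (hc : 0 ≤ c)
    (hb : ∀ f, ‖T f‖ ≤ c * ‖R f‖) :
    ∃ Z : H →L[ℂ] H, ‖Z‖ ≤ c ∧ Z.comp R = T := by
  classical
  set N : Submodule ℂ H := LinearMap.range (R : H →ₗ[ℂ] H) with hN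
  set M : Submodule ℂ H := N.topologicalClosure with hM
  haveI : CompleteSpace M := N.isClosed_topologicalClosure.completeSpace_coe
  -- well-definedness
  have hwd : ∀ a b : H, R a = R b → T a = T b := by
    intro a b hab
    have : ‖T a - T b‖ ≤ c * ‖R a - R b‖ := by
      rw [← map_sub, ← map_sub]; exact hb _
    rw [hab, sub_self, norm_zero, mul_zero] at this
    have := le_antisymm this (norm_nonneg _)
    rwa [norm_sub_eq_zero_iff] at this
  have key : ∀ x : H, x ∈ N → ∃ y, R y = x := fun x hx => LinearMap.mem_range.mp hx
  -- the function on N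
  let g : ↥N → H := fun x => T (key x.1 x.2).choose
  have hg : ∀ (x : ↥N) (a : H), R a = x.1 → g x = T a := by
    intro x a ha
    exact hwd _ _ ((key x.1 x.2).choose_spec.trans ha.symm)
  have hgadd : ∀ x y : ↥N, g (x + y) = g x + g y := by
    intro x y
    have hx := (key x.1 x.2).choose_spec
    have hy := (key y.1 y.2).choose_spec
    have : R ((key x.1 x.2).choose + (key y.1 y.2).choose) = ((x + y : ↥N) : H) := by
      rw [map_add, hx, hy]; rfl
    rw [hg (x + y) _ this, map_add]
  have hgsmul : ∀ (a : ℂ) (x : ↥N), g (a • x) = a • g x := by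
    intro a x
    have hx := (key x.1 x.2).choose_spec
    have : R (a • (key x.1 x.2).choose) = ((a • x : ↥N) : H) := by
      rw [map_smul, hx]; rfl
    rw [hg (a • x) _ this, map_smul]
  have hgb : ∀ x : ↥N, ‖g x‖ ≤ c * ‖x‖ := by
    intro x
    have hx := (key x.1 x.2).choose_spec
    calc ‖g x‖ ≤ c * ‖R (key x.1 x.2).choose‖ := hb _
    _ = c * ‖x‖ := by rw [hx]; rfl
  let f₀ : ↥N →L[ℂ] H := LinearMap.mkContinuous ⟨⟨g, hgadd⟩, fun a x => hgsmul a x⟩ c hgb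
  -- inclusion N → M as CLM
  let eLin : ↥N →ₗ[ℂ] ↥M := Submodule.inclusion N.le_topologicalClosure
  have hecoe : ∀ x : ↥N, ((eLin x : ↥M) : H) = (x : H) := fun x => rfl
  have heb : ∀ x : ↥N, ‖eLin x‖ ≤ 1 * ‖x‖ := fun x => by
    rw [one_mul]
    show ‖((eLin x : ↥M) : H)‖ ≤ ‖(x : H)‖
    rw [hecoe]
  let e : ↥N →L[ℂ] ↥M := LinearMap.mkContinuous eLin 1 heb
  have h_e : ∀ x : ↥N, ‖x‖ ≤ (1 : NNReal) * ‖e x‖ := by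
    intro x
    have : ‖e x‖ = ‖x‖ := by
      show ‖((eLin x : ↥M) : H)‖ = ‖(x : H)‖
      rw [hecoe]
    rw [this]; simp
  have h_dense : DenseRange e := by
    intro x
    rw [closure_subtype]
    have himg : (Subtype.val '' Set.range e : Set H) = (N : Set H) := by
      ext z
      constructor
      · rintro ⟨w, ⟨n, rfl⟩, rfl⟩
        exact (e n).2 |> fun h => by
          have : ((e n : ↥M) : H) = (n : H) := hecoe n
          rw [this]; exact n.2
      · intro hz
        exact ⟨e ⟨z, hz⟩, ⟨⟨z, hz⟩, rfl⟩, hecoe _⟩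
    rw [himg]
    have hx2 : (x : H) ∈ M := x.2
    rwa [hM, ← Submodule.topologicalClosure_coe] at *
  let Z₀ : ↥M →L[ℂ] H :=
    f₀.extend e
  have hZ₀ : ‖Z₀‖ ≤ 1 * ‖f₀‖ := f₀.opNorm_extend_le h_dense h_e
  have hf₀ : ‖f₀‖ ≤ c := LinearMap.mkContinuous_norm_le _ hc _
  refine ⟨Z₀.comp (M.orthogonalProjectionOnto), ?_, ?_⟩
  · calc ‖Z₀.comp (M.orthogonalProjectionOnto)‖ ≤ ‖Z₀‖ * ‖(M.orthogonalProjectionOnto : H →L[ℂ] ↥M)‖ :=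
      opNorm_comp_le _ _
    _ ≤ (1 * ‖f₀‖) * 1 := by
      apply mul_le_mul hZ₀ (Submodule.orthogonalProjectionOnto_norm_le M) (norm_nonneg (M.orthogonalProjectionOnto : H →L[ℂ] ↥M))
      positivity
    _ ≤ c := by simpa using hf₀
  · ext f
    have hmN : R f ∈ N := LinearMap.mem_range_self _ f
    have hmM : R f ∈ M := N.le_topologicalClosure hmN
    have hproj : M.orthogonalProjectionOnto (R f) = ⟨R f, hmM⟩ := by
      exact Submodule.orthogonalProjectionOnto_mem_subspace_eq_self (⟨R f, hmM⟩ : ↥M)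
    have hee : e ⟨R f, hmN⟩ = ⟨R f, hmM⟩ := rfl
    simp only [ContinuousLinearMap.comp_apply, hproj, ← hee]
    rw [ContinuousLinearMap.extend_eq (h_dense := h_dense) (h_e := (isUniformEmbedding_of_bound _ h_e).isUniformInducing)]
    exact hg ⟨R f, hmN⟩ f rfl

lemma amgm_opt (a b x : ℝ) (ha : 0 ≤ a) (hb : 0 ≤ b)
    (h : ∀ t : ℝ, 0 < t → x ≤ (t ^ 2 * a ^ 2 + (t⁻¹) ^ 2 * b ^ 2) / 2) : x ≤ a * b := by
  have hstep : ∀ ε : ℝ, 0 < ε → x ≤ a * b + ε * (a + b) / 2 := by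
    intro ε hε
    have hden : 0 < a + ε := by linarith
    have hnum : 0 < b + ε := by linarith
    set t := Real.sqrt ((b + ε) / (a + ε)) with ht
    have htpos : 0 < t := Real.sqrt_pos.mpr (by positivity)
    have ht2 : t ^ 2 = (b + ε) / (a + ε) := Real.sq_sqrt (by positivity)
    have hti2 : (t⁻¹) ^ 2 = (a + ε) / (b + ε) := by
      rw [inv_pow, ht2]; rw [inv_div]
    have := h t htpos
    rw [ht2, hti2] at this
    have h1 : (b + ε) / (a + ε) * a ^ 2 ≤ a * (b + ε) := by
      rw [div_mul_eq_mul_div, div_le_iff₀ hden]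
      nlinarith [mul_nonneg (mul_nonneg hnum.le ha) hε.le]
    have h2 : (a + ε) / (b + ε) * b ^ 2 ≤ b * (a + ε) := by
      rw [div_mul_eq_mul_div, div_le_iff₀ hnum]
      nlinarith [mul_nonneg (mul_nonneg hden.le hb) hε.le]
    calc x ≤ ((b + ε) / (a + ε) * a ^ 2 + (a + ε) / (b + ε) * b ^ 2) / 2 := this
    _ ≤ (a * (b + ε) + b * (a + ε)) / 2 := by linarith
    _ = a * b + ε * (a + b) / 2 := by ring
  by_contra hcon
  push_neg at hcon
  have hab : 0 < a + b := by
    by_contra hab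
    push_neg at hab
    have ha0 : a = 0 := le_antisymm (by linarith) ha
    have hb0 : b = 0 := le_antisymm (by linarith) hb
    have h1 := hstep 1 one_pos
    rw [ha0, hb0] at h1 hcon
    norm_num at h1
    linarith
  have hε : 0 < (x - a * b) / (a + b) := div_pos (by linarith) hab
  have h2 := hstep _ hε
  have h3 : ((x - a * b) / (a + b)) * (a + b) = x - a * b :=
    div_mul_cancel₀ _ (ne_of_gt hab)
  nlinarith

lemma cs_op (S R : H →L[ℂ] H) (hS : ContinuousLinearMap.adjoint S = S)
    (hb : ∀ f, ‖(⟪S f, f⟫_ℂ)‖ ≤ ‖R f‖ ^ 2) (f g : H) :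
    ‖(⟪S f, g⟫_ℂ)‖ ≤ ‖R f‖ * ‖R g‖ := by
  have hre : ∀ u v : H, (⟪S u, v⟫_ℂ).re ≤ (‖R u‖ ^ 2 + ‖R v‖ ^ 2) / 2 := by
    intro u v
    have hsym : (⟪S v, u⟫_ℂ).re = (⟪S u, v⟫_ℂ).re := by
      have h0 := adjoint_inner_left S u v
      rw [hS] at h0
      rw [h0, ← inner_conj_symm]
      exact Complex.conj_re _
    have hid : (⟪S (u+v), u+v⟫_ℂ).re - (⟪S (u-v), u-v⟫_ℂ).re = 4 * (⟪S u, v⟫_ℂ).re := by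
      simp only [map_add, map_sub, inner_add_left, inner_add_right, inner_sub_left,
        inner_sub_right, Complex.sub_re, Complex.add_re]
      linarith
    have hb1 : (⟪S (u+v), u+v⟫_ℂ).re ≤ ‖R u + R v‖ ^ 2 := by
      calc (⟪S (u+v), u+v⟫_ℂ).re ≤ ‖(⟪S (u+v), u+v⟫_ℂ)‖ := Complex.re_le_norm _
      _ ≤ ‖R (u+v)‖ ^ 2 := hb _
      _ = ‖R u + R v‖ ^ 2 := by rw [map_add]
    have hb2 : -(⟪S (u-v), u-v⟫_ℂ).re ≤ ‖R u - R v‖ ^ 2 := by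
      calc -(⟪S (u-v), u-v⟫_ℂ).re ≤ |(⟪S (u-v), u-v⟫_ℂ).re| := neg_le_abs _
      _ ≤ ‖(⟪S (u-v), u-v⟫_ℂ)‖ := Complex.abs_re_le_norm _
      _ ≤ ‖R (u-v)‖ ^ 2 := hb _
      _ = ‖R u - R v‖ ^ 2 := by rw [map_sub]
    have hpar := parallelogram_law_with_norm ℂ (R u) (R v)
    nlinarith [hid]
  have habs : ∀ u v : H, ‖(⟪S u, v⟫_ℂ)‖ ≤ (‖R u‖ ^ 2 + ‖R v‖ ^ 2) / 2 := by
    intro u v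
    by_cases hz : (⟪S u, v⟫_ℂ) = 0
    · rw [hz, norm_zero]; positivity
    · set z := (⟪S u, v⟫_ℂ) with hzdef
      set c : ℂ := (‖z‖ : ℂ) / z with hcdef
      have hcz : c * z = (‖z‖ : ℂ) := div_mul_cancel₀ _ hz
      have hcabs : ‖c‖ = 1 := by
        rw [hcdef, norm_div, Complex.norm_real, Real.norm_eq_abs,
          _root_.abs_of_nonneg (norm_nonneg z), div_self (norm_ne_zero_iff.mpr hz)]
      have h1 : (⟪S u, c • v⟫_ℂ) = (‖z‖ : ℂ) := by rw [inner_smul_right, hcz]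
      have h2 := hre u (c • v)
      rw [h1, Complex.ofReal_re] at h2
      have h3 : ‖R (c • v)‖ = ‖R v‖ := by rw [map_smul, norm_smul, hcabs, one_mul]
      rwa [h3] at h2
  have hscale : ∀ t : ℝ, 0 < t →
      ‖(⟪S f, g⟫_ℂ)‖ ≤ (t ^ 2 * ‖R f‖ ^ 2 + (t⁻¹) ^ 2 * ‖R g‖ ^ 2) / 2 := by
    intro t ht
    have h1 := habs ((t : ℂ) • f) (((t⁻¹ : ℝ) : ℂ) • g)
    have h2 : (⟪S ((t : ℂ) • f), ((t⁻¹ : ℝ) : ℂ) • g⟫_ℂ) = (⟪S f, g⟫_ℂ) := by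
      rw [map_smul, inner_smul_left, inner_smul_right, Complex.conj_ofReal, ← mul_assoc,
        ← Complex.ofReal_mul, mul_inv_cancel₀ (ne_of_gt ht)]
      simp
    have h3 : ‖R ((t : ℂ) • f)‖ ^ 2 = t ^ 2 * ‖R f‖ ^ 2 := by
      rw [map_smul, norm_smul, Complex.norm_real, Real.norm_eq_abs, abs_of_pos ht, mul_pow]
    have h4 : ‖R (((t⁻¹ : ℝ) : ℂ) • g)‖ ^ 2 = (t⁻¹) ^ 2 * ‖R g‖ ^ 2 := by
      rw [map_smul, norm_smul, Complex.norm_real, Real.norm_eq_abs,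
        abs_of_pos (inv_pos.mpr ht), mul_pow]
    rw [h2, h3, h4] at h1
    exact h1
  exact amgm_opt ‖R f‖ ‖R g‖ _ (norm_nonneg _) (norm_nonneg _) hscale


lemma central (S R : H →L[ℂ] H) (hS : IsSelfAdjoint S)
    (hb : ∀ f, ‖(⟪S f, f⟫_ℂ)‖ ≤ ‖R f‖ ^ 2) :
    ∃ C : H →L[ℂ] H, IsSelfAdjoint C ∧ ‖C‖ ≤ 1 ∧
      (ContinuousLinearMap.adjoint R).comp (C.comp R) = S := by
  have hSadj : ContinuousLinearMap.adjoint S = S := by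
    rw [← ContinuousLinearMap.star_eq_adjoint]; exact hS
  have hcs : ∀ f g, ‖(⟪S f, g⟫_ℂ)‖ ≤ ‖R f‖ * ‖R g‖ := cs_op S R hSadj hb
  have hS1 : ∀ f, ‖S f‖ ≤ ‖R‖ * ‖R f‖ := by
    intro f
    by_cases h0 : S f = 0
    · rw [h0, norm_zero]; positivity
    · have h1 := hcs f (S f)
      have h2 : ‖(⟪S f, S f⟫_ℂ)‖ = ‖S f‖ ^ 2 := by
        rw [@inner_self_eq_norm_sq_to_K ℂ, norm_pow, RCLike.norm_ofReal,
          _root_.abs_of_nonneg (norm_nonneg _)]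
      rw [h2] at h1
      have h3 : ‖R (S f)‖ ≤ ‖R‖ * ‖S f‖ := R.le_opNorm _
      have h4 : 0 < ‖S f‖ := norm_pos_iff.mpr h0
      have h5 : ‖S f‖ ^ 2 ≤ (‖R‖ * ‖R f‖) * ‖S f‖ := by nlinarith [norm_nonneg (R f)]
      rw [pow_two] at h5
      exact le_of_mul_le_mul_right h5 h4
  obtain ⟨Z₁, hZ₁n, hZ₁⟩ := douglasLite R S ‖R‖ (norm_nonneg R) hS1
  set M : Submodule ℂ H := (LinearMap.range (R : H →ₗ[ℂ] H)).topologicalClosure with hM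
  haveI : CompleteSpace M := (LinearMap.range (R : H →ₗ[ℂ] H)).isClosed_topologicalClosure.completeSpace_coe
  set P : H →L[ℂ] H := M.subtypeL.comp (M.orthogonalProjectionOnto) with hP
  have hPsa : IsSelfAdjoint P := isSelfAdjoint_starProjection M
  have hPadj : ContinuousLinearMap.adjoint P = P := by
    rw [← ContinuousLinearMap.star_eq_adjoint]; exact hPsa
  have hPmem : ∀ x, P x ∈ M := fun x => (M.orthogonalProjectionOnto x).2
  have hPR : P.comp R = R := by
    ext f
    have hmM : R f ∈ M :=
      (LinearMap.range (R : H →ₗ[ℂ] H)).le_topologicalClosure (LinearMap.mem_range_self _ f)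
    show (↑(M.orthogonalProjectionOnto (R f)) : H) = R f
    exact Submodule.starProjection_eq_self_iff.mpr hmM
  have hPidem : ∀ x, P (P x) = P x := by
    intro x
    show (↑(M.orthogonalProjectionOnto (P x)) : H) = P x
    exact Submodule.starProjection_eq_self_iff.mpr (hPmem x)
  set W : H →L[ℂ] H := P.comp (ContinuousLinearMap.adjoint Z₁) with hW
  have hWle : ∀ f, ‖W f‖ ≤ ‖R f‖ := by
    intro f
    set y := ContinuousLinearMap.adjoint Z₁ f with hy
    have claim : ∀ g ∈ M, ‖(⟪y, g⟫_ℂ)‖ ≤ ‖R f‖ * ‖g‖ := by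
      have hclosed : IsClosed {g : H | ‖(⟪y, g⟫_ℂ)‖ ≤ ‖R f‖ * ‖g‖} := by
        apply isClosed_le
        · exact (continuous_const.inner continuous_id).norm
        · exact continuous_const.mul continuous_norm
      have hsubN : (LinearMap.range (R : H →ₗ[ℂ] H) : Set H) ⊆ {g : H | ‖(⟪y, g⟫_ℂ)‖ ≤ ‖R f‖ * ‖g‖} := by
        rintro _ ⟨h, rfl⟩
        have e1 : (⟪y, R h⟫_ℂ) = ⟪f, Z₁ (R h)⟫_ℂ := adjoint_inner_left Z₁ (R h) f
        have e2 : Z₁ (R h) = S h := by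
          have := congrArg (fun (A : H →L[ℂ] H) => A h) hZ₁
          simpa using this
        have e3 : ‖(⟪f, S h⟫_ℂ)‖ = ‖(⟪S h, f⟫_ℂ)‖ := by
          rw [← inner_conj_symm]
          exact RCLike.norm_conj _
        rw [Set.mem_setOf_eq, ContinuousLinearMap.coe_coe, e1, e2, e3]
        calc ‖(⟪S h, f⟫_ℂ)‖ ≤ ‖R h‖ * ‖R f‖ := hcs h f
        _ = ‖R f‖ * ‖R h‖ := mul_comm _ _
      intro g hg
      have hMsub : (M : Set H) ⊆ {g : H | ‖(⟪y, g⟫_ℂ)‖ ≤ ‖R f‖ * ‖g‖} := by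
        rw [hM, Submodule.topologicalClosure_coe]
        exact hclosed.closure_subset_iff.mpr hsubN
      exact hMsub hg
    have hWfM : W f ∈ M := hPmem y
    have e4 : (⟪W f, W f⟫_ℂ) = ⟪y, W f⟫_ℂ := by
      have := adjoint_inner_left P (P y) y
      rw [hPadj, hPidem] at this
      exact this
    by_cases h0 : W f = 0
    · rw [h0, norm_zero]; positivity
    · have h5 : ‖W f‖ ^ 2 = (⟪W f, W f⟫_ℂ).re := norm_sq_eq_re_inner (𝕜 := ℂ) (W f)
      have h6 : (⟪W f, W f⟫_ℂ).re ≤ ‖R f‖ * ‖W f‖ := by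
        calc (⟪W f, W f⟫_ℂ).re ≤ ‖(⟪W f, W f⟫_ℂ)‖ := Complex.re_le_norm _
        _ = ‖(⟪y, W f⟫_ℂ)‖ := by rw [e4]
        _ ≤ ‖R f‖ * ‖W f‖ := claim (W f) hWfM
      have h7 : 0 < ‖W f‖ := norm_pos_iff.mpr h0
      have h8 : ‖W f‖ * ‖W f‖ ≤ ‖R f‖ * ‖W f‖ := by rw [← pow_two]; linarith [h5 ▸ h6]
      exact le_of_mul_le_mul_right h8 h7
  obtain ⟨C₀, hC₀n, hC₀⟩ := douglasLite R W 1 zero_le_one (fun f => by rw [one_mul]; exact hWle f)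
  have hWadj : ContinuousLinearMap.adjoint W = Z₁.comp P := by
    rw [hW, adjoint_comp, adjoint_adjoint, hPadj]
  have hkey : (ContinuousLinearMap.adjoint R).comp
      ((ContinuousLinearMap.adjoint C₀).comp R) = S := by
    calc (ContinuousLinearMap.adjoint R).comp ((ContinuousLinearMap.adjoint C₀).comp R)
        = (ContinuousLinearMap.adjoint (C₀.comp R)).comp R := by
          rw [adjoint_comp, ContinuousLinearMap.comp_assoc]
      _ = (ContinuousLinearMap.adjoint W).comp R := by rw [hC₀]
      _ = Z₁.comp (P.comp R) := by rw [hWadj, ContinuousLinearMap.comp_assoc]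
      _ = Z₁.comp R := by rw [hPR]
      _ = S := hZ₁
  have hkey2 : (ContinuousLinearMap.adjoint R).comp (C₀.comp R) = S := by
    have := congrArg ContinuousLinearMap.adjoint hkey
    rw [hSadj, adjoint_comp, adjoint_comp, adjoint_adjoint, adjoint_adjoint,
      ContinuousLinearMap.comp_assoc] at this
    exact this
  refine ⟨((2:ℝ)⁻¹) • (ContinuousLinearMap.adjoint C₀ + C₀), ?_, ?_, ?_⟩
  · rw [IsSelfAdjoint, star_smul, star_add, ContinuousLinearMap.star_eq_adjoint,
      ContinuousLinearMap.star_eq_adjoint, adjoint_adjoint]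
    rw [star_trivial]
    rw [add_comm]
  · rw [norm_smul]
    have h9 : ‖ContinuousLinearMap.adjoint C₀ + C₀‖ ≤ 2 := by
      calc ‖ContinuousLinearMap.adjoint C₀ + C₀‖
          ≤ ‖ContinuousLinearMap.adjoint C₀‖ + ‖C₀‖ := norm_add_le _ _
        _ = ‖C₀‖ + ‖C₀‖ := by rw [LinearIsometryEquiv.norm_map]
        _ ≤ 2 := by linarith
    calc ‖(2:ℝ)⁻¹‖ * ‖ContinuousLinearMap.adjoint C₀ + C₀‖ ≤ ‖(2:ℝ)⁻¹‖ * 2 := by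
          apply mul_le_mul_of_nonneg_left h9 (norm_nonneg _)
      _ = 1 := by norm_num
  · rw [ContinuousLinearMap.smul_comp, ContinuousLinearMap.comp_smul,
      ContinuousLinearMap.add_comp, ContinuousLinearMap.comp_add, hkey, hkey2]
    rw [← two_smul ℝ S, smul_smul]
    norm_num

end Central

lemma colOp_norm_sq {H₁ H₂ : Type*}
    [NormedAddCommGroup H₁] [InnerProductSpace ℂ H₁] [CompleteSpace H₁]
    [NormedAddCommGroup H₂] [InnerProductSpace ℂ H₂] [CompleteSpace H₂]
    (A : H₁ →L[ℂ] H₁) (B : H₁ →L[ℂ] H₂) (f : H₁) :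
    ‖colOp A B f‖ ^ 2 = ‖A f‖ ^ 2 + ‖B f‖ ^ 2 := by
  rw [WithLp.prod_norm_sq_eq_of_L2]
  show ‖A f + 0‖ ^ 2 + ‖(0 : H₂) + B f‖ ^ 2 = _
  simp

lemma aux_main {H₁ H₂ : Type*}
    [NormedAddCommGroup H₁] [InnerProductSpace ℂ H₁] [CompleteSpace H₁]
    [NormedAddCommGroup H₂] [InnerProductSpace ℂ H₂] [CompleteSpace H₂]
    (k : ℝ) (hk : 0 ≤ k)
    (T : H₁ →L[ℂ] H₁) (V : H₁ →L[ℂ] H₂) (hT : ‖T‖ ≤ 1) (hV : ‖V‖ ≤ 1)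
    (h1 : ∀ f : H₁, k * |(⟪T f, f⟫_ℂ).im| ≤
        ‖defectOp (colOp T (V.comp (defectOp T))) f‖ ^ 2) :
    ∃ C : H₁ →L[ℂ] H₁, IsSelfAdjoint C ∧ ‖C‖ ≤ 1 ∧
      ((k : ℝ) : ℂ) • (((2 : ℂ) * Complex.I)⁻¹ • (ContinuousLinearMap.adjoint T - T)) =
        (defectOp T).comp ((defectOp V).comp (C.comp ((defectOp V).comp (defectOp T)))) := by
  set S : H₁ →L[ℂ] H₁ :=
    ((k : ℝ) : ℂ) • (((2 : ℂ) * Complex.I)⁻¹ • (ContinuousLinearMap.adjoint T - T)) with hSdef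
  set R : H₁ →L[ℂ] H₁ := (defectOp V).comp (defectOp T) with hRdef
  have hSsa : IsSelfAdjoint S := by
    rw [IsSelfAdjoint, hSdef, star_smul, star_smul, star_sub,
      ContinuousLinearMap.star_eq_adjoint, ContinuousLinearMap.star_eq_adjoint, adjoint_adjoint]
    have hc : (starRingEnd ℂ) ((2 * Complex.I)⁻¹) = -((2 * Complex.I)⁻¹) := by
      rw [map_inv₀, map_mul, Complex.conj_I, map_ofNat, mul_neg, inv_neg]
    rw [RCLike.star_def, Complex.conj_ofReal, hc,
      neg_smul, ← smul_neg, neg_sub]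
  have hnormS : ∀ f : H₁, ‖(⟪S f, f⟫_ℂ)‖ = k * |(⟪T f, f⟫_ℂ).im| := by
    intro f
    have e1 : (⟪S f, f⟫_ℂ) =
        (starRingEnd ℂ) ((k : ℂ)) * ((starRingEnd ℂ) (((2 : ℂ) * Complex.I)⁻¹) *
          ⟪(ContinuousLinearMap.adjoint T - T) f, f⟫_ℂ) := by
      rw [hSdef]
      simp only [ContinuousLinearMap.smul_apply]
      rw [inner_smul_left, inner_smul_left]
    have e2 : ⟪(ContinuousLinearMap.adjoint T - T) f, f⟫_ℂ =
        (starRingEnd ℂ) (⟪T f, f⟫_ℂ) - ⟪T f, f⟫_ℂ := by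
      rw [ContinuousLinearMap.sub_apply, inner_sub_left]
      congr 1
      rw [adjoint_inner_left, ← inner_conj_symm]
    have e3 : ‖(starRingEnd ℂ) (⟪T f, f⟫_ℂ) - ⟪T f, f⟫_ℂ‖ = 2 * |(⟪T f, f⟫_ℂ).im| := by
      rw [← norm_neg, neg_sub, Complex.sub_conj]
      rw [norm_mul, Complex.norm_I, mul_one, Complex.norm_real, Real.norm_eq_abs,
        abs_mul, _root_.abs_two]
    rw [e1, e2, norm_mul, norm_mul, RCLike.norm_conj, RCLike.norm_conj, e3]
    rw [norm_inv, norm_mul, Complex.norm_I, mul_one, Complex.norm_ofNat]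
    rw [Complex.norm_real, Real.norm_eq_abs, _root_.abs_of_nonneg hk]
    ring
  set T₁ := colOp T (V.comp (defectOp T)) with hT₁def
  have hT₁normsq : ∀ f : H₁, ‖T₁ f‖ ^ 2 = ‖T f‖ ^ 2 + ‖V (defectOp T f)‖ ^ 2 := by
    intro f
    rw [hT₁def, colOp_norm_sq]
    rfl
  have hVD : ∀ f : H₁, ‖V (defectOp T f)‖ ^ 2 ≤ ‖defectOp T f‖ ^ 2 := by
    intro f
    have : ‖V (defectOp T f)‖ ≤ ‖defectOp T f‖ := by
      calc ‖V (defectOp T f)‖ ≤ ‖V‖ * ‖defectOp T f‖ := V.le_opNorm _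
      _ ≤ 1 * ‖defectOp T f‖ := by gcongr
      _ = _ := one_mul _
    exact pow_le_pow_left₀ (norm_nonneg _) this 2
  have hT₁ : ‖T₁‖ ≤ 1 := by
    apply ContinuousLinearMap.opNorm_le_bound _ zero_le_one
    intro f
    rw [one_mul]
    have hsq : ‖T₁ f‖ ^ 2 ≤ ‖f‖ ^ 2 := by
      rw [hT₁normsq f]
      have := hVD f
      have hD := defectOp_norm_sq T hT f
      linarith
    nlinarith [norm_nonneg (T₁ f), norm_nonneg f]
  have hRnorm : ∀ f : H₁, ‖defectOp T₁ f‖ ^ 2 = ‖R f‖ ^ 2 := by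
    intro f
    have hL := defectOp_norm_sq T₁ hT₁ f
    have hRf : ‖R f‖ ^ 2 = ‖defectOp T f‖ ^ 2 - ‖V (defectOp T f)‖ ^ 2 := by
      rw [hRdef]
      exact defectOp_norm_sq V hV (defectOp T f)
    have hD := defectOp_norm_sq T hT f
    have h2 := hT₁normsq f
    rw [hL, hRf, hD, h2]
    ring
  have hb : ∀ f : H₁, ‖(⟪S f, f⟫_ℂ)‖ ≤ ‖R f‖ ^ 2 := by
    intro f
    rw [hnormS f, ← hRnorm f]
    exact h1 f
  obtain ⟨C, hCsa, hCn, hC⟩ := central S R hSsa hb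
  refine ⟨C, hCsa, hCn, ?_⟩
  have hadjR : ContinuousLinearMap.adjoint R = (defectOp T).comp (defectOp V) := by
    rw [hRdef, adjoint_comp, (isSelfAdjoint_defectOp T).adjoint_eq,
      (isSelfAdjoint_defectOp V).adjoint_eq]
  rw [← hC, hadjR, ContinuousLinearMap.comp_assoc]

theorem statement17 {H₁ H₂ : Type*}
    [NormedAddCommGroup H₁] [InnerProductSpace ℂ H₁] [CompleteSpace H₁]
    [NormedAddCommGroup H₂] [InnerProductSpace ℂ H₂] [CompleteSpace H₂]
    (φ₀ : ℝ) (hφ₁ : 0 < φ₀) (hφ₂ : φ₀ < Real.pi / 2)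
    (T₁₁ : H₁ →L[ℂ] H₁) (V : H₁ →L[ℂ] H₂) (U : H₂ →L[ℂ] H₁)
    (h11 : ‖T₁₁‖ ≤ 1) (hV : ‖V‖ ≤ 1) (hU : ‖U‖ ≤ 1)
    (h1 : ∀ f : H₁,
      2 * (Real.cos φ₀ / Real.sin φ₀) * |(⟪T₁₁ f, f⟫_ℂ).im| ≤
        ‖defectOp (colOp T₁₁ (V.comp (defectOp T₁₁))) f‖ ^ 2)
    (h2 : ∀ f : H₁,
      2 * (Real.cos φ₀ / Real.sin φ₀) * |(⟪ContinuousLinearMap.adjoint T₁₁ f, f⟫_ℂ).im| ≤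
        ‖defectOp (colOp (ContinuousLinearMap.adjoint T₁₁)
            ((ContinuousLinearMap.adjoint U).comp (codefectOp T₁₁))) f‖ ^ 2) :
    ∃ C' C'' : H₁ →L[ℂ] H₁,
      IsSelfAdjoint C' ∧ ‖C'‖ ≤ 1 ∧ IsSelfAdjoint C'' ∧ ‖C''‖ ≤ 1 ∧
      ((2 * (Real.cos φ₀ / Real.sin φ₀) : ℝ) : ℂ) •
          (((2 : ℂ) * Complex.I)⁻¹ • (ContinuousLinearMap.adjoint T₁₁ - T₁₁)) =
        (defectOp T₁₁).comp
          ((defectOp V).comp (C'.comp ((defectOp V).comp (defectOp T₁₁)))) ∧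
      ((2 * (Real.cos φ₀ / Real.sin φ₀) : ℝ) : ℂ) •
          (((2 : ℂ) * Complex.I)⁻¹ • (ContinuousLinearMap.adjoint T₁₁ - T₁₁)) =
        (codefectOp T₁₁).comp
          ((codefectOp U).comp (C''.comp ((codefectOp U).comp (codefectOp T₁₁)))) := by
  set k : ℝ := 2 * (Real.cos φ₀ / Real.sin φ₀) with hkdef
  have hsin : 0 < Real.sin φ₀ :=
    Real.sin_pos_of_pos_of_lt_pi hφ₁ (by linarith [Real.pi_pos])
  have hcos : 0 < Real.cos φ₀ := by
    apply Real.cos_pos_of_mem_Ioo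
    constructor
    · linarith [Real.pi_pos]
    · exact hφ₂
  have hk : 0 ≤ k := by positivity
  obtain ⟨C', h1sa, h1n, h1eq⟩ := aux_main k hk T₁₁ V h11 hV h1
  have hdc : defectOp (ContinuousLinearMap.adjoint T₁₁) = codefectOp T₁₁ := by
    rw [defectOp, codefectOp, adjoint_adjoint]
  have hdcU : defectOp (ContinuousLinearMap.adjoint U) = codefectOp U := by
    rw [defectOp, codefectOp, adjoint_adjoint]
  have hadjT : ‖ContinuousLinearMap.adjoint T₁₁‖ ≤ 1 := by
    rw [LinearIsometryEquiv.norm_map]; exact h11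
  have hadjU : ‖ContinuousLinearMap.adjoint U‖ ≤ 1 := by
    rw [LinearIsometryEquiv.norm_map]; exact hU
  have h2' : ∀ f : H₁, k * |(⟪ContinuousLinearMap.adjoint T₁₁ f, f⟫_ℂ).im| ≤
      ‖defectOp (colOp (ContinuousLinearMap.adjoint T₁₁)
        ((ContinuousLinearMap.adjoint U).comp
          (defectOp (ContinuousLinearMap.adjoint T₁₁)))) f‖ ^ 2 := by
    intro f
    rw [hdc]
    exact h2 f
  obtain ⟨C₂, h2sa, h2n, h2eq⟩ :=
    aux_main k hk (ContinuousLinearMap.adjoint T₁₁) (ContinuousLinearMap.adjoint U) hadjT hadjU h2'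
  rw [adjoint_adjoint, hdc, hdcU] at h2eq
  refine ⟨C', -C₂, h1sa, h1n, h2sa.neg, by rw [norm_neg]; exact h2n, h1eq, ?_⟩
  have hflip : ContinuousLinearMap.adjoint T₁₁ - T₁₁ = -(T₁₁ - ContinuousLinearMap.adjoint T₁₁) :=
    (neg_sub _ _).symm
  calc ((k : ℝ) : ℂ) • (((2 : ℂ) * Complex.I)⁻¹ •
        (ContinuousLinearMap.adjoint T₁₁ - T₁₁))
      = -(((k : ℝ) : ℂ) • (((2 : ℂ) * Complex.I)⁻¹ •
          (T₁₁ - ContinuousLinearMap.adjoint T₁₁))) := by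
        rw [hflip, smul_neg, smul_neg]
    _ = -((codefectOp T₁₁).comp ((codefectOp U).comp
          (C₂.comp ((codefectOp U).comp (codefectOp T₁₁))))) := by rw [h2eq]
    _ = (codefectOp T₁₁).comp ((codefectOp U).comp
          ((-C₂).comp ((codefectOp U).comp (codefectOp T₁₁)))) := by
        simp [ContinuousLinearMap.comp_neg, ContinuousLinearMap.neg_comp]
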